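/- Let A and B be groups and W ⊆ F_∞ a set of words. Then (A ∗_W B)/W(A ∗_W B) is isomorphic to (A/W(A)) ∗_W (B/W(B)); together with the isomorphism W(A) × W(B) ≅ W(A ∗_W B) this yields a short exact sequence 1 → W(A) × W(B) → A ∗_W B → (A/W(A)) ∗_W (B/W(B)) → 1. Moreover, the induced isomorphism restricts to an isomorphism of the subgroup [A,B]^w of A ∗_W B onto the subgroup [A/W(A), B/W(B)]^w of (A/W(A)) ∗_W (B/W(B)). -/

import Mathlib

open Monoid

/-- The verbal subgroup `W(G)`: the subgroup of `G` generated by all evaluations of the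
words of `W` at tuples of elements of `G`. -/
def verbalSubgroup (W : Set (FreeGroup ℕ)) (G : Type*) [Group G] : Subgroup G :=
  Subgroup.closure {x | ∃ w ∈ W, ∃ f : ℕ → G, FreeGroup.lift f w = x}

theorem lift_comp_eval {G H : Type*} [Group G] [Group H] (φ : G →* H) (f : ℕ → G)
    (w : FreeGroup ℕ) : φ (FreeGroup.lift f w) = FreeGroup.lift (φ ∘ f) w := by
  have h : φ.comp (FreeGroup.lift f) = FreeGroup.lift (φ ∘ f) :=
    FreeGroup.ext_hom _ _ (fun a => by simp)
  exact DFunLike.congr_fun h w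

theorem verbalSubgroup_map_le {G H : Type*} [Group G] [Group H] (W : Set (FreeGroup ℕ))
    (φ : G →* H) : (verbalSubgroup W G).map φ ≤ verbalSubgroup W H := by
  rw [verbalSubgroup, MonoidHom.map_closure, Subgroup.closure_le]
  rintro x ⟨y, ⟨w, hw, f, rfl⟩, rfl⟩
  exact Subgroup.subset_closure ⟨w, hw, φ ∘ f, (lift_comp_eval φ f w).symm⟩

/-- Verbal subgroups are normal. -/
instance verbalSubgroup_normal (W : Set (FreeGroup ℕ)) (G : Type*) [Group G] :
    (verbalSubgroup W G).Normal := by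
  constructor
  intro n hn g
  have h := verbalSubgroup_map_le (G := G) (H := G) W (MulAut.conj g).toMonoidHom
  have h2 : (MulAut.conj g).toMonoidHom n ∈ verbalSubgroup W G := h ⟨n, hn, rfl⟩
  simpa using h2

open scoped commutatorElement in
/-- The subgroup `[A,B]` of the free product `A ∗ B` generated by the commutators
`[a,b] = a * b * a⁻¹ * b⁻¹` with `a ∈ A`, `b ∈ B`. -/
def commSubgroup (A B : Type*) [Group A] [Group B] : Subgroup (Coprod A B) :=
  Subgroup.closure {x | ∃ (a : A) (b : B), x = ⁅(Coprod.inl a : Coprod A B), Coprod.inr b⁆}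

/-- The kernel of the verbal product: (the normal closure of) `W(A ∗ B) ∩ [A,B]`.
Since `W(A ∗ B) ∩ [A,B]` is in fact a normal subgroup of `A ∗ B`, taking the normal
closure does not change the subgroup. -/
def verbalProductKer (W : Set (FreeGroup ℕ)) (A B : Type*) [Group A] [Group B] :
    Subgroup (Coprod A B) :=
  Subgroup.normalClosure ((verbalSubgroup W (Coprod A B) ⊓ commSubgroup A B : Subgroup _) : Set _)

instance verbalProductKer_normal (W : Set (FreeGroup ℕ)) (A B : Type*) [Group A] [Group B] :
    (verbalProductKer W A B).Normal := Subgroup.normalClosure_normal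

/-- The verbal product `A ∗_W B := (A ∗ B)/(W(A ∗ B) ∩ [A,B])`. -/
abbrev VerbalProduct (W : Set (FreeGroup ℕ)) (A B : Type*) [Group A] [Group B] : Type _ :=
  Coprod A B ⧸ verbalProductKer W A B

/-- The quotient homomorphism `q : A ∗ B → A ∗_W B`. -/
def vq (W : Set (FreeGroup ℕ)) (A B : Type*) [Group A] [Group B] :
    Coprod A B →* VerbalProduct W A B :=
  QuotientGroup.mk' (verbalProductKer W A B)

/-- The copy of `A` inside the verbal product `A ∗_W B`. -/
def vinl (W : Set (FreeGroup ℕ)) (A B : Type*) [Group A] [Group B] :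
    A →* VerbalProduct W A B := (vq W A B).comp Coprod.inl

/-- The copy of `B` inside the verbal product `A ∗_W B`. -/
def vinr (W : Set (FreeGroup ℕ)) (A B : Type*) [Group A] [Group B] :
    B →* VerbalProduct W A B := (vq W A B).comp Coprod.inr

/-- `[A,B]^w`, the image of `[A,B]` in the verbal product `A ∗_W B`. -/
def commW (W : Set (FreeGroup ℕ)) (A B : Type*) [Group A] [Group B] :
    Subgroup (VerbalProduct W A B) := (commSubgroup A B).map (vq W A B)


/-!
Write `N = W(A ∗ B) ⊓ [A,B]` and `φ : A ∗ B → Ā ∗ B̄` for the map induced by the projections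
`A → Ā = A/W(A)` and `B → B̄ = B/W(B)`. Since `[A,B]` is the kernel of `A ∗ B → A × B`, every
`x ∈ W(A ∗ B)` factors as `a * b * k` with `a ∈ W(A)`, `b ∈ W(B)` and `k ∈ N`; as `W(A)` and `B`
commute modulo `N`, this gives `W(A) × W(B) ≅ W(A ∗_W B)`. The kernel of `φ` is generated by
`W(A)` and `W(B)`, so it lies in `W(A ∗ B)`, and with the factorisation this shows
`φ⁻¹(W(Ā ∗ B̄) ⊓ [Ā,B̄]) = W(A ∗ B)`: the map `A ∗_W B → Ā ∗_W B̄` induced by `φ` has kernel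
`W(A ∗_W B)`. Finally `W(A ∗_W B) ⊓ [A,B]^w = 1`, so this map is injective on `[A,B]^w`.
-/

open scoped commutatorElement

section GroupTheory

variable {G H : Type*} [Group G] [Group H]

theorem ker_le_of_comp_eq_mk' {f : G →* H} {N : Subgroup G} [N.Normal] (ρ : H →* G ⧸ N)
    (h : ρ.comp f = QuotientGroup.mk' N) : f.ker ≤ N := by
  intro x hx
  rw [← QuotientGroup.eq_one_iff, ← QuotientGroup.mk'_apply, ← h, MonoidHom.comp_apply,
    MonoidHom.mem_ker.mp hx, map_one]

theorem commute_mk_of_commutatorElement_mem {N : Subgroup G} [N.Normal] {x y : G}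
    (h : ⁅x, y⁆ ∈ N) : Commute (x : G ⧸ N) y := by
  rw [← commutatorElement_eq_one_iff_commute]
  have h1 := (QuotientGroup.eq_one_iff _).mpr h
  rwa [← QuotientGroup.mk'_apply, map_commutatorElement] at h1

theorem MonoidHom.injOn_of_ker_inf_eq_bot {f : G →* H} {K : Subgroup G} (h : f.ker ⊓ K = ⊥) :
    Set.InjOn f K := by
  intro x hx y hy hxy
  have : x⁻¹ * y ∈ f.ker ⊓ K := ⟨by simp [hxy], K.mul_mem (K.inv_mem hx) hy⟩
  rw [h, Subgroup.mem_bot] at this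
  exact inv_mul_eq_one.mp this

end GroupTheory

section VerbalSubgroup

variable (W : Set (FreeGroup ℕ)) {G H : Type*} [Group G] [Group H]

theorem map_mem_verbalSubgroup (φ : G →* H) {x : G} (hx : x ∈ verbalSubgroup W G) :
    φ x ∈ verbalSubgroup W H :=
  verbalSubgroup_map_le W φ ⟨x, hx, rfl⟩

theorem verbalSubgroup_map_of_surjective {φ : G →* H} (hφ : Function.Surjective φ) :
    (verbalSubgroup W G).map φ = verbalSubgroup W H := by
  refine le_antisymm (verbalSubgroup_map_le W φ) ?_
  rw [verbalSubgroup, Subgroup.closure_le]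
  rintro _ ⟨w, hw, f, rfl⟩
  refine ⟨FreeGroup.lift (Function.surjInv hφ ∘ f) w,
    Subgroup.subset_closure ⟨w, hw, _, rfl⟩, ?_⟩
  rw [lift_comp_eval, ← Function.comp_assoc, Function.comp_surjInv, Function.id_comp]

theorem verbalSubgroup_comap_of_surjective {φ : G →* H} (hφ : Function.Surjective φ)
    (hker : φ.ker ≤ verbalSubgroup W G) :
    (verbalSubgroup W H).comap φ = verbalSubgroup W G := by
  rw [← verbalSubgroup_map_of_surjective W hφ, Subgroup.comap_map_eq, sup_of_le_left hker]

theorem commutatorElement_mem_verbalSubgroup {x : G} (hx : x ∈ verbalSubgroup W G) (y : G) :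
    ⁅x, y⁆ ∈ verbalSubgroup W G :=
  Subgroup.commutator_le_left _ ⊤ (Subgroup.commutator_mem_commutator hx (Subgroup.mem_top y))

end VerbalSubgroup

namespace Monoid.Coprod

variable {A B A' B' : Type*} [Group A] [Group B] [Group A'] [Group B']

theorem map_surjective {f : A →* A'} {g : B →* B'} (hf : Function.Surjective f)
    (hg : Function.Surjective g) : Function.Surjective (map f g) := by
  rw [← MonoidHom.range_eq_top, eq_top_iff, ← range_inl_sup_range_inr, sup_le_iff]
  constructor
  · rintro _ ⟨a, rfl⟩
    obtain ⟨a, rfl⟩ := hf a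
    exact ⟨inl a, map_apply_inl f g a⟩
  · rintro _ ⟨b, rfl⟩
    obtain ⟨b, rfl⟩ := hg b
    exact ⟨inr b, map_apply_inr f g b⟩

theorem ker_map_mk'_le {K : Subgroup A} [K.Normal] {L : Subgroup B} [L.Normal]
    {N : Subgroup (Coprod A B)} [N.Normal] (hK : K ≤ N.comap inl) (hL : L ≤ N.comap inr) :
    (map (QuotientGroup.mk' K) (QuotientGroup.mk' L)).ker ≤ N := by
  refine ker_le_of_comp_eq_mk'
    (lift (QuotientGroup.lift K ((QuotientGroup.mk' N).comp inl) ?_)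
      (QuotientGroup.lift L ((QuotientGroup.mk' N).comp inr) ?_)) (hom_ext rfl rfl)
  · rwa [← MonoidHom.comap_ker, QuotientGroup.ker_mk']
  · rwa [← MonoidHom.comap_ker, QuotientGroup.ker_mk']

end Monoid.Coprod

section CommSubgroup

variable {A B : Type*} [Group A] [Group B]

theorem commutatorElement_inl_inr_mem_commSubgroup (a : A) (b : B) :
    ⁅(Coprod.inl a : Coprod A B), Coprod.inr b⁆ ∈ commSubgroup A B :=
  Subgroup.subset_closure ⟨a, b, rfl⟩

instance commSubgroup_normal : (commSubgroup A B).Normal := by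
  rw [← Subgroup.normalizer_eq_top_iff, eq_top_iff, ← Coprod.range_inl_sup_range_inr,
    sup_le_iff, commSubgroup, Subgroup.le_normalizer_closure_iff,
    Subgroup.le_normalizer_closure_iff]
  constructor
  · rintro _ ⟨a, rfl⟩ _ ⟨c, d, rfl⟩
    have : (Coprod.inl a : Coprod A B) * ⁅(Coprod.inl c : Coprod A B), Coprod.inr d⁆ *
        (Coprod.inl a)⁻¹ = ⁅(Coprod.inl (a * c) : Coprod A B), Coprod.inr d⁆ *
          ⁅(Coprod.inl a : Coprod A B), Coprod.inr d⁆⁻¹ := by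
      simp only [map_mul]; group
    rw [this]
    exact mul_mem (Subgroup.subset_closure ⟨_, _, rfl⟩)
      (inv_mem (Subgroup.subset_closure ⟨_, _, rfl⟩))
  · rintro _ ⟨b, rfl⟩ _ ⟨c, d, rfl⟩
    have : (Coprod.inr b : Coprod A B) * ⁅(Coprod.inl c : Coprod A B), Coprod.inr d⁆ *
        (Coprod.inr b)⁻¹ = ⁅(Coprod.inl c : Coprod A B), Coprod.inr b⁆⁻¹ *
          ⁅(Coprod.inl c : Coprod A B), Coprod.inr (b * d)⁆ := by
      simp only [map_mul]; group
    rw [this]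
    exact mul_mem (inv_mem (Subgroup.subset_closure ⟨_, _, rfl⟩))
      (Subgroup.subset_closure ⟨_, _, rfl⟩)

theorem ker_toProd_eq_commSubgroup :
    (Coprod.toProd : Coprod A B →* A × B).ker = commSubgroup A B := by
  refine le_antisymm ?_ ?_
  · let ι₁ := (QuotientGroup.mk' (commSubgroup A B)).comp Coprod.inl
    let ι₂ := (QuotientGroup.mk' (commSubgroup A B)).comp Coprod.inr
    have hcomm : ∀ a b, Commute (ι₁ a) (ι₂ b) := fun a b =>
      commute_mk_of_commutatorElement_mem (commutatorElement_inl_inr_mem_commSubgroup a b)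
    exact ker_le_of_comp_eq_mk' (ι₁.noncommCoprod ι₂ hcomm)
      (Coprod.hom_ext (by ext; simp [ι₁, ι₂]) (by ext; simp [ι₁, ι₂]))
  · rw [commSubgroup, Subgroup.closure_le]
    rintro _ ⟨a, b, rfl⟩
    simp [commutatorElement_def]

variable {A' B' : Type*} [Group A'] [Group B']

theorem commSubgroup_map_coprodMap_le (f : A →* A') (g : B →* B') :
    (commSubgroup A B).map (Coprod.map f g) ≤ commSubgroup A' B' := by
  rw [commSubgroup, MonoidHom.map_closure, Subgroup.closure_le]
  rintro _ ⟨_, ⟨a, b, rfl⟩, rfl⟩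
  simpa [map_commutatorElement] using commutatorElement_inl_inr_mem_commSubgroup (f a) (g b)

theorem commSubgroup_map_coprodMap {f : A →* A'} {g : B →* B'} (hf : Function.Surjective f)
    (hg : Function.Surjective g) :
    (commSubgroup A B).map (Coprod.map f g) = commSubgroup A' B' := by
  refine le_antisymm (commSubgroup_map_coprodMap_le f g) ?_
  rw [commSubgroup, Subgroup.closure_le]
  rintro _ ⟨a', b', rfl⟩
  obtain ⟨a, rfl⟩ := hf a'
  obtain ⟨b, rfl⟩ := hg b'
  exact ⟨_, commutatorElement_inl_inr_mem_commSubgroup a b, by simp [map_commutatorElement]⟩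

end CommSubgroup

section VerbalProduct

variable (W : Set (FreeGroup ℕ)) {A B A' B' : Type*} [Group A] [Group B] [Group A'] [Group B']

theorem verbalProductKer_eq_inf :
    verbalProductKer W A B = verbalSubgroup W (Coprod A B) ⊓ commSubgroup A B :=
  Subgroup.normalClosure_eq_self _

variable {W}

theorem vq_surjective : Function.Surjective (vq W A B) :=
  QuotientGroup.mk'_surjective _

theorem vq_eq_one_iff {x : Coprod A B} : vq W A B x = 1 ↔ x ∈ verbalProductKer W A B :=
  QuotientGroup.eq_one_iff x

theorem verbalSubgroup_verbalProduct :
    verbalSubgroup W (VerbalProduct W A B) = (verbalSubgroup W (Coprod A B)).map (vq W A B) :=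
  (verbalSubgroup_map_of_surjective W vq_surjective).symm

theorem commutatorElement_inl_inr_mem_verbalProductKer {a : A} (ha : a ∈ verbalSubgroup W A)
    (b : B) : ⁅(Coprod.inl a : Coprod A B), Coprod.inr b⁆ ∈ verbalProductKer W A B := by
  rw [verbalProductKer_eq_inf]
  have hinl := map_mem_verbalSubgroup W (Coprod.inl : A →* Coprod A B) ha
  exact ⟨commutatorElement_mem_verbalSubgroup W hinl _,
    commutatorElement_inl_inr_mem_commSubgroup a b⟩

theorem commute_vinl_vinr {a : A} (ha : a ∈ verbalSubgroup W A) (b : B) :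
    Commute (vinl W A B a) (vinr W A B b) :=
  commute_mk_of_commutatorElement_mem (commutatorElement_inl_inr_mem_verbalProductKer ha b)

theorem exists_eq_inl_mul_inr_mul_of_mem_verbalSubgroup {x : Coprod A B}
    (hx : x ∈ verbalSubgroup W (Coprod A B)) :
    ∃ a ∈ verbalSubgroup W A, ∃ b ∈ verbalSubgroup W B, ∃ k ∈ verbalProductKer W A B,
      x = Coprod.inl a * Coprod.inr b * k := by
  have ha := map_mem_verbalSubgroup W Coprod.fst hx
  have hb := map_mem_verbalSubgroup W Coprod.snd hx
  refine ⟨_, ha, _, hb, (Coprod.inl (Coprod.fst x) * Coprod.inr (Coprod.snd x))⁻¹ * x, ?_,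
    by group⟩
  rw [verbalProductKer_eq_inf, ← ker_toProd_eq_commSubgroup]
  refine Subgroup.mem_inf.mpr ⟨mul_mem (inv_mem (mul_mem (map_mem_verbalSubgroup W _ ha)
    (map_mem_verbalSubgroup W _ hb))) hx, ?_⟩
  simp [← Coprod.prod_mk_fst_snd]

variable (W A B)

def verbalProductToProd : VerbalProduct W A B →* A × B :=
  QuotientGroup.lift _ Coprod.toProd <| by
    rw [verbalProductKer_eq_inf, ker_toProd_eq_commSubgroup]
    exact inf_le_right

def verbalSubgroupProdHom : verbalSubgroup W A × verbalSubgroup W B →* VerbalProduct W A B :=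
  ((vinl W A B).comp (verbalSubgroup W A).subtype).noncommCoprod
    ((vinr W A B).comp (verbalSubgroup W B).subtype) fun a b => commute_vinl_vinr a.2 b.1

theorem verbalSubgroupProdHom_injective : Function.Injective (verbalSubgroupProdHom W A B) := by
  have h : verbalProductToProd W A B ∘ verbalSubgroupProdHom W A B = Prod.map (↑) (↑) := by
    ext x <;> simp [verbalProductToProd, verbalSubgroupProdHom, vinl, vinr, vq]
  exact Function.Injective.of_comp (h ▸ Subtype.val_injective.prodMap Subtype.val_injective)

theorem range_verbalSubgroupProdHom :
    (verbalSubgroupProdHom W A B).range = verbalSubgroup W (VerbalProduct W A B) := by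
  rw [verbalSubgroup_verbalProduct]
  apply le_antisymm
  · rintro _ ⟨x, rfl⟩
    exact ⟨_, mul_mem (map_mem_verbalSubgroup W Coprod.inl x.1.2)
      (map_mem_verbalSubgroup W Coprod.inr x.2.2), map_mul _ _ _⟩
  · rintro _ ⟨x, hx, rfl⟩
    obtain ⟨a, ha, b, hb, k, hk, rfl⟩ := exists_eq_inl_mul_inr_mul_of_mem_verbalSubgroup hx
    refine ⟨(⟨a, ha⟩, ⟨b, hb⟩), ?_⟩
    rw [map_mul, vq_eq_one_iff.mpr hk, mul_one, map_mul]
    rfl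

theorem verbalSubgroup_inf_commW_eq_bot :
    verbalSubgroup W (VerbalProduct W A B) ⊓ commW W A B = ⊥ := by
  rw [eq_bot_iff, verbalSubgroup_verbalProduct]
  rintro _ ⟨⟨x, hx, rfl⟩, ⟨y, hy, hxy⟩⟩
  have hker : x⁻¹ * y ∈ verbalProductKer W A B := QuotientGroup.eq.mp hxy.symm
  rw [verbalProductKer_eq_inf] at hker
  have hyW : y ∈ verbalSubgroup W (Coprod A B) := by simpa using mul_mem hx hker.1
  rw [Subgroup.mem_bot, ← hxy, vq_eq_one_iff, verbalProductKer_eq_inf]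
  exact ⟨hyW, hy⟩

variable {W A B}

def verbalProductMap (f : A →* A') (g : B →* B') :
    VerbalProduct W A B →* VerbalProduct W A' B' :=
  QuotientGroup.map _ _ (Coprod.map f g) <| by
    rw [verbalProductKer_eq_inf, verbalProductKer_eq_inf, Subgroup.comap_inf]
    exact inf_le_inf (Subgroup.map_le_iff_le_comap.mp (verbalSubgroup_map_le W _))
      (Subgroup.map_le_iff_le_comap.mp (commSubgroup_map_coprodMap_le f g))

theorem verbalProductMap_surjective {f : A →* A'} {g : B →* B'} (hf : Function.Surjective f)
    (hg : Function.Surjective g) : Function.Surjective (verbalProductMap (W := W) f g) :=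
  QuotientGroup.map_surjective_of_surjective _ _ _
    ((QuotientGroup.mk_surjective).comp (Coprod.map_surjective hf hg)) _

theorem map_commW_verbalProductMap {f : A →* A'} {g : B →* B'} (hf : Function.Surjective f)
    (hg : Function.Surjective g) : (commW W A B).map (verbalProductMap f g) = commW W A' B' := by
  rw [commW, Subgroup.map_map, show (verbalProductMap f g).comp (vq W A B) =
    (vq W A' B').comp (Coprod.map f g) from rfl, ← Subgroup.map_map,
    commSubgroup_map_coprodMap hf hg, commW]

theorem comap_verbalProductKer_coprodMap_mk' :
    (verbalProductKer W (A ⧸ verbalSubgroup W A) (B ⧸ verbalSubgroup W B)).comap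
      (Coprod.map (QuotientGroup.mk' _) (QuotientGroup.mk' _)) =
      verbalSubgroup W (Coprod A B) := by
  set φ := Coprod.map (QuotientGroup.mk' (verbalSubgroup W A))
    (QuotientGroup.mk' (verbalSubgroup W B))
  have hφ : Function.Surjective φ :=
    Coprod.map_surjective (QuotientGroup.mk'_surjective _) (QuotientGroup.mk'_surjective _)
  have hker : φ.ker ≤ verbalSubgroup W (Coprod A B) :=
    Coprod.ker_map_mk'_le (fun _ => map_mem_verbalSubgroup W (Coprod.inl : A →* Coprod A B))
      (fun _ => map_mem_verbalSubgroup W (Coprod.inr : B →* Coprod A B))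
  rw [verbalProductKer_eq_inf, Subgroup.comap_inf, verbalSubgroup_comap_of_surjective W hφ hker,
    inf_eq_left]
  intro x hx
  obtain ⟨a, ha, b, hb, k, hk, rfl⟩ := exists_eq_inl_mul_inr_mul_of_mem_verbalSubgroup hx
  rw [verbalProductKer_eq_inf] at hk
  have hφk : φ (Coprod.inl a * Coprod.inr b * k) = φ k := by
    simp [φ, (QuotientGroup.eq_one_iff a).mpr ha, (QuotientGroup.eq_one_iff b).mpr hb]
  rw [Subgroup.mem_comap, hφk]
  exact commSubgroup_map_coprodMap_le _ _ ⟨k, hk.2, rfl⟩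

theorem ker_verbalProductMap_mk' :
    (verbalProductMap (W := W) (QuotientGroup.mk' (verbalSubgroup W A))
      (QuotientGroup.mk' (verbalSubgroup W B))).ker = verbalSubgroup W (VerbalProduct W A B) := by
  rw [verbalProductMap, QuotientGroup.ker_map, comap_verbalProductKer_coprodMap_mk',
    verbalSubgroup_verbalProduct]
  rfl

end VerbalProduct

/-- `(A ∗_W B)/W(A ∗_W B) ≅ (A/W(A)) ∗_W (B/W(B))`, giving the short exact sequence
`1 → W(A) × W(B) → A ∗_W B → (A/W(A)) ∗_W (B/W(B)) → 1`; moreover the natural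
surjection restricts to an isomorphism of `[A,B]^w` onto `[A/W(A), B/W(B)]^w`. -/
theorem verbalProduct_short_exact_sequence {A B : Type*} [Group A] [Group B]
    (W : Set (FreeGroup ℕ)) :
    ∃ p : VerbalProduct W A B →*
        VerbalProduct W (A ⧸ verbalSubgroup W A) (B ⧸ verbalSubgroup W B),
      (∀ a : A, p (vinl W A B a) =
        vinl W (A ⧸ verbalSubgroup W A) (B ⧸ verbalSubgroup W B) (QuotientGroup.mk a)) ∧
      (∀ b : B, p (vinr W A B b) =
        vinr W (A ⧸ verbalSubgroup W A) (B ⧸ verbalSubgroup W B) (QuotientGroup.mk b)) ∧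
      Function.Surjective p ∧
      p.ker = verbalSubgroup W (VerbalProduct W A B) ∧
      (∃ ι : (verbalSubgroup W A × verbalSubgroup W B) →* VerbalProduct W A B,
        (∀ x : verbalSubgroup W A × verbalSubgroup W B,
          ι x = vinl W A B x.1 * vinr W A B x.2) ∧
        Function.Injective ι ∧
        ι.range = verbalSubgroup W (VerbalProduct W A B)) ∧
      (commW W A B).map p =
        commW W (A ⧸ verbalSubgroup W A) (B ⧸ verbalSubgroup W B) ∧
      Set.InjOn p (commW W A B : Set (VerbalProduct W A B)) ∧
      Nonempty ((VerbalProduct W A B ⧸ verbalSubgroup W (VerbalProduct W A B)) ≃*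
        VerbalProduct W (A ⧸ verbalSubgroup W A) (B ⧸ verbalSubgroup W B)) := by
  let p := verbalProductMap (W := W) (QuotientGroup.mk' (verbalSubgroup W A))
    (QuotientGroup.mk' (verbalSubgroup W B))
  have hsurj : Function.Surjective p :=
    verbalProductMap_surjective (QuotientGroup.mk'_surjective _) (QuotientGroup.mk'_surjective _)
  have hker : p.ker = verbalSubgroup W (VerbalProduct W A B) := ker_verbalProductMap_mk'
  refine ⟨p, fun _ => rfl, fun _ => rfl, hsurj, hker,
    ⟨verbalSubgroupProdHom W A B, fun _ => rfl, verbalSubgroupProdHom_injective W A B,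
      range_verbalSubgroupProdHom W A B⟩,
    map_commW_verbalProductMap (QuotientGroup.mk'_surjective _) (QuotientGroup.mk'_surjective _),
    MonoidHom.injOn_of_ker_inf_eq_bot (hker ▸ verbalSubgroup_inf_commW_eq_bot W A B),
    ⟨(QuotientGroup.quotientMulEquivOfEq hker.symm).trans
    (QuotientGroup.quotientKerEquivOfSurjective p hsurj)⟩⟩
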